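/- arXiv:2501.16232 — 2 statements merged into one kernel-verified Lean document; each statement's English description precedes it below -/
import Mathlib

section
/- Let λ₁, λ₂, λ₃, λ₄ be real numbers with λ₁ + λ₂ + λ₃ + λ₄ = 0 and λ₁·λ₂·λ₃·λ₄ = 0. Then |λ₁³ + λ₂³ + λ₃³ + λ₄³| ≤ (1/√6)·(λ₁² + λ₂² + λ₃² + λ₄²)^{3/2}. -/
/-!
If one curvature vanishes, the other three sum to zero, and for such a triple
`(a² + b² + c²)³ - 6 (a³ + b³ + c³)² = 2 ((a - b)(b - c)(c - a))²` is twice the discriminant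
of the cubic with roots `a, b, c`, hence nonnegative.
-/

theorem sum_sq_cube_sub_six_mul_sq_sum_cube {a b c : ℝ} (h : a + b + c = 0) :
    (a ^ 2 + b ^ 2 + c ^ 2) ^ 3 - 6 * (a ^ 3 + b ^ 3 + c ^ 3) ^ 2 =
      2 * ((a - b) * (b - c) * (c - a)) ^ 2 := by
  obtain rfl : c = -(a + b) := by linarith
  ring

theorem six_mul_sq_sum_cubes_le {a b c : ℝ} (h : a + b + c = 0) :
    6 * (a ^ 3 + b ^ 3 + c ^ 3) ^ 2 ≤ (a ^ 2 + b ^ 2 + c ^ 2) ^ 3 := by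
  have := sum_sq_cube_sub_six_mul_sq_sum_cube h
  linarith [sq_nonneg ((a - b) * (b - c) * (c - a))]

theorem abs_le_one_div_sqrt_mul_rpow_of_mul_sq_le {x s k : ℝ} (hs : 0 ≤ s) (hk : 0 < k)
    (h : k * x ^ 2 ≤ s ^ 3) : |x| ≤ 1 / √k * s ^ ((3 : ℝ) / 2) := by
  have hpow : s ^ ((3 : ℝ) / 2) = √(s ^ 3) := by
    rw [Real.sqrt_eq_rpow, ← Real.rpow_natCast, ← Real.rpow_mul hs]
    norm_num
  calc |x| = √(x ^ 2) := (Real.sqrt_sq_eq_abs x).symm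
    _ ≤ √(s ^ 3 / k) := Real.sqrt_le_sqrt ((le_div_iff₀' hk).2 h)
    _ = 1 / √k * s ^ ((3 : ℝ) / 2) := by
      rw [hpow, Real.sqrt_div' _ hk.le, div_eq_inv_mul, one_div]

theorem f3_bound_four_curvatures (l1 l2 l3 l4 : ℝ)
    (hsum : l1 + l2 + l3 + l4 = 0) (hprod : l1 * l2 * l3 * l4 = 0) :
    |l1 ^ 3 + l2 ^ 3 + l3 ^ 3 + l4 ^ 3| ≤
      (1 / Real.sqrt 6) * (l1 ^ 2 + l2 ^ 2 + l3 ^ 2 + l4 ^ 2) ^ ((3 : ℝ) / 2) := by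
  apply abs_le_one_div_sqrt_mul_rpow_of_mul_sq_le (by positivity) (by norm_num)
  rcases mul_eq_zero.1 hprod with h | rfl
  · rcases mul_eq_zero.1 h with h | rfl
    · rcases mul_eq_zero.1 h with rfl | rfl
      · simpa using six_mul_sq_sum_cubes_le (a := l2) (b := l3) (c := l4) (by linarith)
      · simpa using six_mul_sq_sum_cubes_le (a := l1) (b := l3) (c := l4) (by linarith)
    · simpa using six_mul_sq_sum_cubes_le (a := l1) (b := l2) (c := l4) (by linarith)
  · simpa using six_mul_sq_sum_cubes_le (a := l1) (b := l2) (c := l3) (by linarith)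
end

section
/- Let λ₁ ≤ λ₂ ≤ λ₃ ≤ λ₄ be real numbers with λ₁ + λ₂ + λ₃ + λ₄ = 0, λ₁·λ₂·λ₃·λ₄ = 0, and suppose that −(1/√6)·(λ₁² + λ₂² + λ₃² + λ₄²)^{3/2} < λ₁³ + λ₂³ + λ₃³ + λ₄³ < 0. Then λ₁ < λ₂ = 0 < λ₃ < λ₄. -/
/-!
Once one principal curvature vanishes, the other three sum to zero, so `f₃` is three times
their product `abc`. Negativity of `f₃` then rules out the zero sitting anywhere but second and forces the
other three to be nonzero. The remaining degenerate case `λ₃ = λ₄ = t`, `λ₁ = -2t` is exactly the one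
in which `f₃` attains its lower bound `-(1/√6)|A|³`.
-/

theorem cube_add_cube_add_cube_of_add_eq_zero {R : Type*} [CommRing R] {a b c : R}
    (h : a + b + c = 0) : a ^ 3 + b ^ 3 + c ^ 3 = 3 * a * b * c := by
  linear_combination (a ^ 2 + b ^ 2 + c ^ 2 - a * b - b * c - c * a) * h

theorem sq_rpow_three_halves {x : ℝ} (hx : 0 ≤ x) : (x ^ 2) ^ ((3 : ℝ) / 2) = x ^ 3 := by
  rw [← Real.rpow_natCast x 2, ← Real.rpow_mul hx]
  norm_num

theorem neg_inv_sqrt_six_mul_rpow_eq_cube_sum {t : ℝ} (ht : 0 ≤ t) :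
    -((1 / √6) * ((-(2 * t)) ^ 2 + 0 ^ 2 + t ^ 2 + t ^ 2) ^ ((3 : ℝ) / 2)) =
      (-(2 * t)) ^ 3 + 0 ^ 3 + t ^ 3 + t ^ 3 := by
  have hsq : (-(2 * t)) ^ 2 + 0 ^ 2 + t ^ 2 + t ^ 2 = (√6 * t) ^ 2 := by
    rw [mul_pow, Real.sq_sqrt (by norm_num)]
    ring
  rw [hsq, sq_rpow_three_halves (by positivity)]
  field_simp
  linear_combination (-t ^ 3) * Real.sq_sqrt (show (0 : ℝ) ≤ 6 by norm_num)

theorem second_eq_zero_of_cube_sum_neg {l1 l2 l3 l4 : ℝ}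
    (h12 : l1 ≤ l2) (h23 : l2 ≤ l3) (h34 : l3 ≤ l4)
    (hsum : l1 + l2 + l3 + l4 = 0) (hprod : l1 * l2 * l3 * l4 = 0)
    (hneg : l1 ^ 3 + l2 ^ 3 + l3 ^ 3 + l4 ^ 3 < 0) : l2 = 0 := by
  rcases mul_eq_zero.mp hprod with h | h4
  · rcases mul_eq_zero.mp h with h | h3
    · rcases mul_eq_zero.mp h with h1 | h2
      · linarith
      · exact h2
    · subst h3
      have hcube := cube_add_cube_add_cube_of_add_eq_zero (show l1 + l2 + l4 = 0 by linarith)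
      have : 0 ≤ l1 * l2 * l4 :=
        mul_nonneg (mul_nonneg_of_nonpos_of_nonpos (h12.trans h23) h23) h34
      linarith
  · linarith

theorem f3_negative_case (l1 l2 l3 l4 : ℝ)
    (h12 : l1 ≤ l2) (h23 : l2 ≤ l3) (h34 : l3 ≤ l4)
    (hsum : l1 + l2 + l3 + l4 = 0) (hprod : l1 * l2 * l3 * l4 = 0)
    (hlow : -((1 / Real.sqrt 6) * (l1 ^ 2 + l2 ^ 2 + l3 ^ 2 + l4 ^ 2) ^ ((3 : ℝ) / 2)) <
      l1 ^ 3 + l2 ^ 3 + l3 ^ 3 + l4 ^ 3)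
    (hneg : l1 ^ 3 + l2 ^ 3 + l3 ^ 3 + l4 ^ 3 < 0) :
    l1 < l2 ∧ l2 = 0 ∧ 0 < l3 ∧ l3 < l4 := by
  obtain rfl := second_eq_zero_of_cube_sum_neg h12 h23 h34 hsum hprod hneg
  have hcube : l1 ^ 3 + 0 ^ 3 + l3 ^ 3 + l4 ^ 3 = 3 * l1 * l3 * l4 := by
    rw [← cube_add_cube_add_cube_of_add_eq_zero (by linarith : l1 + l3 + l4 = 0)]
    ring
  have hne : l1 * l3 * l4 ≠ 0 := by
    intro h
    linarith
  obtain ⟨⟨hl1, hl3⟩, -⟩ : (l1 ≠ 0 ∧ l3 ≠ 0) ∧ l4 ≠ 0 := by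
    simpa only [mul_ne_zero_iff] using hne
  refine ⟨h12.lt_of_ne hl1, rfl, h23.lt_of_ne hl3.symm, h34.lt_of_ne fun h43 => ?_⟩
  obtain rfl : l1 = -(2 * l3) := by linarith
  subst h43
  exact hlow.ne (neg_inv_sqrt_six_mul_rpow_eq_cube_sum h23)
end
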